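/- arXiv:2601.04234 — 6 statements merged into one kernel-verified Lean document; each statement's English description precedes it below -/
import Mathlib

section
/- (Critical patience level, general case) Fix p ∈ (0,1], r > 0, and C > -r. There exists a unique γ* ∈ (0,1) such that Δ(γ*,p,C,r) = 0, and for every γ ∈ [0,1) one has Δ(γ,p,C,r) > 0 if and only if γ > γ*. -/
/-- Confrontation incentive Δ(γ,p,C,r) = -C + γ·r/(1-γ) - r/(1-γ(1-p)). -/
noncomputable def confIncentive (γ p C r : ℝ) : ℝ :=
  -C + γ * r / (1 - γ) - r / (1 - γ * (1 - p))

/-!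
The algebraic identity `γ r/(1-γ) - r/(1-γ(1-p)) = r p γ / ((1-γ)(1-γ(1-p))) - r` turns `Δ` into
`-(C + r)` plus a positive multiple of a strictly increasing function of `γ`. So `Δ` is strictly
increasing and continuous on `[0,1)`, negative at `γ = 0`, and nonnegative as soon as
`γ/(1-γ) ≥ (C + r)/(r p)`; the intermediate value theorem gives the root, and strict
monotonicity gives its uniqueness and the sign pattern.
-/

open Set

section
variable {γ p : ℝ}

lemma one_sub_mul_one_sub_pos (hγ : γ ∈ Ico 0 1) (hp : 0 ≤ p) : 0 < 1 - γ * (1 - p) := by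
  nlinarith [hγ.1, hγ.2]

lemma confIncentive_eq (C r : ℝ) (hγ : γ ∈ Ico 0 1) (hp : 0 ≤ p) :
    confIncentive γ p C r = -(C + r) + r * p * (γ / ((1 - γ) * (1 - γ * (1 - p)))) := by
  have h₁ : 1 - γ ≠ 0 := (sub_pos.2 hγ.2).ne'
  have h₂ := (one_sub_mul_one_sub_pos hγ hp).ne'
  unfold confIncentive
  field_simp
  ring

lemma div_one_sub_le_div_mul_one_sub (hγ : γ ∈ Ico 0 1) (hp : 0 ≤ p) (hp1 : p ≤ 1) :
    γ / (1 - γ) ≤ γ / ((1 - γ) * (1 - γ * (1 - p))) := by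
  have h₁ : 0 < 1 - γ := sub_pos.2 hγ.2
  have h₂ := one_sub_mul_one_sub_pos hγ hp
  gcongr γ / ?_
  · exact hγ.1
  · exact mul_le_of_le_one_right h₁.le (by nlinarith [hγ.1])

end

lemma strictMonoOn_div_one_sub_mul_one_sub {q : ℝ} (hq0 : 0 ≤ q) (hq1 : q ≤ 1) :
    StrictMonoOn (fun γ : ℝ => γ / ((1 - γ) * (1 - γ * q))) (Ico 0 1) := by
  rintro x ⟨hx0, hx1⟩ y ⟨hy0, hy1⟩ hxy
  have hqx : 0 < 1 - x * q := by nlinarith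
  have hqy : 0 < 1 - y * q := by nlinarith
  rw [div_lt_div_iff₀ (by nlinarith) (by nlinarith)]
  calc x * ((1 - y) * (1 - y * q)) ≤ x * ((1 - y) * (1 - x * q)) := by gcongr
    _ = (x * (1 - y)) * (1 - x * q) := by ring
    _ < (y * (1 - x)) * (1 - x * q) := by gcongr
    _ = y * ((1 - x) * (1 - x * q)) := by ring

section
variable {p C r : ℝ}

lemma strictMonoOn_confIncentive (hp0 : 0 < p) (hp1 : p ≤ 1) (hr : 0 < r) :
    StrictMonoOn (fun γ => confIncentive γ p C r) (Ico 0 1) := by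
  intro x hx y hy hxy
  simp only [confIncentive_eq C r hx hp0.le, confIncentive_eq C r hy hp0.le]
  have := strictMonoOn_div_one_sub_mul_one_sub (q := 1 - p) (by linarith) (by linarith) hx hy hxy
  gcongr

lemma continuousOn_confIncentive (hp : 0 ≤ p) :
    ContinuousOn (fun γ => confIncentive γ p C r) (Ico 0 1) := by
  unfold confIncentive
  fun_prop (disch := first
    | exact fun γ hγ => (sub_pos.2 hγ.2).ne'
    | exact fun γ hγ => (one_sub_mul_one_sub_pos hγ hp).ne')

lemma confIncentive_zero : confIncentive 0 p C r = -(C + r) := by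
  simp only [confIncentive, zero_mul, sub_zero, div_one, add_zero]; ring

/-- This `γ` solves `γ / (1 - γ) = (C + r) / (r p)`. -/
lemma confIncentive_nonneg_at (hp0 : 0 < p) (hp1 : p ≤ 1) (hr : 0 < r) (hC : -r < C) :
    0 ≤ confIncentive ((C + r) / (C + r + r * p)) p C r := by
  set γ := (C + r) / (C + r + r * p)
  have hCr : 0 < C + r := by linarith
  have hrp : 0 < r * p := mul_pos hr hp0
  have hγ : γ ∈ Ico 0 1 := ⟨by positivity, (div_lt_one (by positivity)).2 (by linarith)⟩
  have hratio : γ / (1 - γ) = (C + r) / (r * p) := by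
    simp only [γ]; field_simp; ring
  rw [confIncentive_eq C r hγ hp0.le]
  have := div_one_sub_le_div_mul_one_sub hγ hp0.le hp1
  rw [hratio, div_le_iff₀' hrp] at this
  linarith

lemma exists_confIncentive_eq_zero (hp0 : 0 < p) (hp1 : p ≤ 1) (hr : 0 < r) (hC : -r < C) :
    ∃ γ ∈ Ioo 0 1, confIncentive γ p C r = 0 := by
  set γ₁ := (C + r) / (C + r + r * p)
  have hγ₁ : γ₁ < 1 := (div_lt_one (by nlinarith)).2 (by nlinarith)
  have hzero : confIncentive 0 p C r < 0 := by rw [confIncentive_zero]; linarith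
  have hγ₁_nonneg := confIncentive_nonneg_at hp0 hp1 hr hC
  obtain ⟨γ, hγ, hroot⟩ := intermediate_value_Icc (div_nonneg (by linarith) (by nlinarith))
    ((continuousOn_confIncentive hp0.le).mono (Icc_subset_Ico_right hγ₁))
    ⟨hzero.le, hγ₁_nonneg⟩
  refine ⟨γ, ⟨hγ.1.lt_of_ne ?_, hγ.2.trans_lt hγ₁⟩, hroot⟩
  rintro rfl
  exact hzero.ne hroot

end

theorem stmt4 (p r C : ℝ) (hp : p ∈ Set.Ioc (0:ℝ) 1) (hr : 0 < r) (hC : -r < C) :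
    ∃! γs : ℝ, γs ∈ Set.Ioo (0:ℝ) 1 ∧ confIncentive γs p C r = 0 ∧
      ∀ γ ∈ Set.Ico (0:ℝ) 1, (0 < confIncentive γ p C r ↔ γs < γ) := by
  obtain ⟨hp0, hp1⟩ := hp
  have hmono := strictMonoOn_confIncentive (C := C) hp0 hp1 hr
  obtain ⟨γs, hγs, hroot⟩ := exists_confIncentive_eq_zero hp0 hp1 hr hC
  refine ⟨γs, ⟨hγs, hroot, fun γ hγ => ?_⟩, fun γ' ⟨hγ', hroot', _⟩ => ?_⟩
  · rw [← hroot]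
    exact hmono.lt_iff_lt (Ioo_subset_Ico_self hγs) hγ
  · exact hmono.injOn (Ioo_subset_Ico_self hγ') (Ioo_subset_Ico_self hγs) (hroot'.trans hroot.symm)
end

section
/- (Critical patience level, zero-cost case) Fix p ∈ (0,1) and r > 0, and let γ* = (1-√p)/(1-p). Then 0 < γ* < 1, Δ(γ*,p,0,r) = 0, and for every γ ∈ [0,1) one has Δ(γ,p,0,r) > 0 if and only if γ > γ*. -/
lemma one_sub_div_one_sub_sq {s : ℝ} (hs : s ≠ 1) : (1 - s) / (1 - s ^ 2) = (1 + s)⁻¹ := by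
  rw [show 1 - s ^ 2 = (1 - s) * (1 + s) by ring, div_mul_cancel_left₀ (sub_ne_zero.mpr hs.symm)]

lemma confIncentive_zero_eq {γ s : ℝ} (r : ℝ) (hγ : γ ≠ 1) (hγs : 1 - γ * (1 - s ^ 2) ≠ 0) :
    confIncentive γ (s ^ 2) 0 r =
      r * (((1 + s) * γ - 1) * (1 - (1 - s) * γ)) / ((1 - γ) * (1 - γ * (1 - s ^ 2))) := by
  have h1 : 1 - γ ≠ 0 := sub_ne_zero.mpr hγ.symm
  unfold confIncentive
  field_simp
  ring

lemma one_sub_mul_pos {a γ : ℝ} (ha0 : 0 ≤ a) (ha1 : a ≤ 1) (hγ : γ < 1) : 0 < 1 - a * γ := by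
  nlinarith [mul_le_mul_of_nonneg_left hγ.le ha0]

lemma confIncentive_zero_pos_iff {γ s r : ℝ} (hs0 : 0 ≤ s) (hs1 : s ≤ 1) (hr : 0 < r)
    (hγ : γ < 1) : 0 < confIncentive γ (s ^ 2) 0 r ↔ (1 + s)⁻¹ < γ := by
  have hsq0 : 0 ≤ 1 - s ^ 2 := by nlinarith
  have hsq1 : 1 - s ^ 2 ≤ 1 := by nlinarith
  have hden : 0 < (1 - γ) * (1 - γ * (1 - s ^ 2)) :=
    mul_pos (by linarith) (by linarith [one_sub_mul_pos hsq0 hsq1 hγ, mul_comm γ (1 - s ^ 2)])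
  have hfac : 0 < 1 - (1 - s) * γ := one_sub_mul_pos (by linarith) (by linarith) hγ
  rw [confIncentive_zero_eq r hγ.ne (right_ne_zero_of_mul hden.ne'), div_pos_iff_of_pos_right hden,
    mul_pos_iff_of_pos_left hr, mul_pos_iff_of_pos_right hfac, sub_pos,
    inv_lt_iff_one_lt_mul₀ (by linarith), mul_comm]

theorem stmt5 (p r : ℝ) (hp : p ∈ Set.Ioo (0:ℝ) 1) (hr : 0 < r) :
    let γs := (1 - Real.sqrt p) / (1 - p)
    0 < γs ∧ γs < 1 ∧ confIncentive γs p 0 r = 0 ∧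
      ∀ γ ∈ Set.Ico (0:ℝ) 1, (0 < confIncentive γ p 0 r ↔ γs < γ) := by
  obtain ⟨hp0, hp1⟩ := hp
  have hs0 : 0 < √p := Real.sqrt_pos.mpr hp0
  have hs1 : √p < 1 := (Real.sqrt_lt' one_pos).mpr (by rwa [one_pow])
  obtain ⟨s, hs, rfl⟩ : ∃ s, √p = s ∧ p = s ^ 2 := ⟨√p, rfl, (Real.sq_sqrt hp0.le).symm⟩
  rw [hs] at hs0 hs1
  intro γs
  have hγs : γs = (1 + s)⁻¹ := by simp only [γs, hs]; exact one_sub_div_one_sub_sq hs1.ne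
  have hγs1 : γs < 1 := by rw [hγs]; exact inv_lt_one_of_one_lt₀ (by linarith)
  have hden : 1 - γs * (1 - s ^ 2) ≠ 0 := by
    rw [mul_comm]; exact (one_sub_mul_pos (by nlinarith) (by nlinarith) hγs1).ne'
  have hroot : (1 + s) * γs - 1 = 0 := by rw [hγs, mul_inv_cancel₀ (by positivity), sub_self]
  refine ⟨by rw [hγs]; positivity, hγs1, ?_, ?_⟩
  · rw [confIncentive_zero_eq r hγs1.ne hden, hroot, zero_mul, mul_zero, zero_div]
  · rintro γ ⟨-, hγ1⟩
    rw [hγs]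
    exact confIncentive_zero_pos_iff hs0.le hs1.le hr hγ1
end

section
/- (Monotonicity of the critical patience level in the confrontation cost) Fix p ∈ (0,1] and r > 0, and let C₁, C₂ be costs with -r < C₁ < C₂. If γ₁, γ₂ ∈ (0,1) satisfy Δ(γ₁,p,C₁,r) = 0 and Δ(γ₂,p,C₂,r) = 0, then γ₁ < γ₂. -/
theorem stmt7 (p r C₁ C₂ γ₁ γ₂ : ℝ) (hp : p ∈ Set.Ioc (0:ℝ) 1) (hr : 0 < r)
    (hC₁ : -r < C₁) (hC₁₂ : C₁ < C₂)
    (hγ₁ : γ₁ ∈ Set.Ioo (0:ℝ) 1) (hγ₂ : γ₂ ∈ Set.Ioo (0:ℝ) 1)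
    (h₁ : confIncentive γ₁ p C₁ r = 0) (h₂ : confIncentive γ₂ p C₂ r = 0) :
    γ₁ < γ₂ := by
  obtain ⟨hp0, hp1⟩ := hp
  obtain ⟨hγ₁0, hγ₁1⟩ := hγ₁
  obtain ⟨hγ₂0, hγ₂1⟩ := hγ₂
  have d1 : (0:ℝ) < 1 - γ₁ := by linarith
  have d2 : (0:ℝ) < 1 - γ₂ := by linarith
  have e1 : (0:ℝ) < 1 - γ₁ * (1 - p) := by nlinarith
  have e2 : (0:ℝ) < 1 - γ₂ * (1 - p) := by nlinarith
  unfold confIncentive at h₁ h₂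
  by_contra h
  push_neg at h
  have h1' : (-C₁) * ((1 - γ₁) * (1 - γ₁ * (1 - p))) + γ₁ * r * (1 - γ₁ * (1 - p))
      - r * (1 - γ₁) = 0 := by
    field_simp at h₁
    nlinarith [h₁]
  have h2' : (-C₂) * ((1 - γ₂) * (1 - γ₂ * (1 - p))) + γ₂ * r * (1 - γ₂ * (1 - p))
      - r * (1 - γ₂) = 0 := by
    field_simp at h₂
    nlinarith [h₂]
  have key : (C₁ - C₂) * ((1-γ₁)*(1-γ₂)*(1-γ₁*(1-p))*(1-γ₂*(1-p)))
      = r*(γ₁-γ₂)*p*(1-γ₁*γ₂*(1-p)) := by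
    linear_combination (-(1-γ₂)*(1-γ₂*(1-p)))*h1' + ((1-γ₁)*(1-γ₁*(1-p)))*h2'
  have hq : (0:ℝ) < 1 - γ₁*γ₂*(1-p) := by nlinarith
  have hN : 0 ≤ r*(γ₁-γ₂)*p*(1-γ₁*γ₂*(1-p)) := by
    apply mul_nonneg
    apply mul_nonneg
    exact mul_nonneg hr.le (by linarith)
    exact hp0.le
    exact hq.le
  have hD : (0:ℝ) < (1-γ₁)*(1-γ₂)*(1-γ₁*(1-p))*(1-γ₂*(1-p)) := by positivity
  nlinarith [mul_pos hD (sub_pos.2 hC₁₂)]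
end

section
/- (The critical patience level tends to 1 as cost grows) Fix p ∈ [0,1], r > 0, and C ≥ 0. If γ ∈ [0,1) satisfies Δ(γ,p,C,r) = 0, then γ > C/(C+r). In particular, any indifference point γ* must exceed C/(C+r), which tends to 1 as C → ∞. -/
theorem stmt8 (p r C γ : ℝ) (hp : p ∈ Set.Icc (0:ℝ) 1) (hr : 0 < r) (hC : 0 ≤ C)
    (hγ : γ ∈ Set.Ico (0:ℝ) 1) (h0 : confIncentive γ p C r = 0) :
    C / (C + r) < γ := by
  obtain ⟨hp0, hp1⟩ := hp
  obtain ⟨hγ0, hγ1⟩ := hγ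
  have hd1 : 0 < 1 - γ := by linarith
  have hd2 : 0 < 1 - γ * (1 - p) := by nlinarith
  have hB : 0 < r / (1 - γ * (1 - p)) := div_pos hr hd2
  unfold confIncentive at h0
  have hA : C < γ * r / (1 - γ) := by linarith
  have h2 : C * (1 - γ) < γ * r := by
    have := (lt_div_iff₀ hd1).mp hA
    linarith
  rw [div_lt_iff₀ (by linarith : (0:ℝ) < C + r)]
  nlinarith
end

section
/- (The zero-cost threshold is a lower bound for the positive-cost threshold) Fix p ∈ (0,1), r > 0, and C > 0. If γ ∈ (0,1) satisfies Δ(γ,p,C,r) = 0, then γ > (1-√p)/(1-p). -/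
theorem stmt9 (p r C γ : ℝ) (hp : p ∈ Set.Ioo (0:ℝ) 1) (hr : 0 < r) (hC : 0 < C)
    (hγ : γ ∈ Set.Ioo (0:ℝ) 1) (h0 : confIncentive γ p C r = 0) :
    (1 - Real.sqrt p) / (1 - p) < γ := by
  obtain ⟨hp0, hp1⟩ := hp
  obtain ⟨hγ0, hγ1⟩ := hγ
  have hs0 : 0 < Real.sqrt p := Real.sqrt_pos.mpr hp0
  have hs1 : Real.sqrt p < 1 := by
    have := Real.sqrt_lt_sqrt hp0.le hp1
    simpa using this
  have hsq : Real.sqrt p ^ 2 = p := Real.sq_sqrt hp0.le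
  have hd1 : 0 < 1 - γ := by linarith
  have hd2 : 0 < 1 - γ * (1 - p) := by nlinarith
  by_contra h
  push_neg at h
  -- h : (1 - √p)/(1-p) ≥ γ, so γ*(1-p) ≤ 1 - √p
  have hle : γ * (1 - p) ≤ 1 - Real.sqrt p := by
    have h1p : 0 < 1 - p := by linarith
    calc γ * (1 - p) ≤ (1 - Real.sqrt p) / (1 - p) * (1 - p) := by
          apply mul_le_mul_of_nonneg_right h h1p.le
      _ = 1 - Real.sqrt p := by field_simp
  unfold confIncentive at h0
  field_simp at h0
  have h1 : γ * (1 + Real.sqrt p) ≤ 1 := by nlinarith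
  have h2 : 0 ≤ 1 - γ * (1 - Real.sqrt p) := by nlinarith
  rw [← hsq] at h0
  have key : C * ((1 - γ) * (1 - γ * (1 - Real.sqrt p ^ 2))) =
      -(r * ((1 - γ * (1 + Real.sqrt p)) * (1 - γ * (1 - Real.sqrt p)))) := by
    linear_combination -h0
  rw [hsq] at key
  have hpos : 0 < C * ((1 - γ) * (1 - γ * (1 - p))) := by positivity
  have hneg : 0 ≤ r * ((1 - γ * (1 + Real.sqrt p)) * (1 - γ * (1 - Real.sqrt p))) := by
    apply mul_nonneg hr.le
    apply mul_nonneg (by linarith) h2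
  linarith
end

section
/- (Short-sighted agents never confront) Fix γ ∈ [0,1/2), r > 0, p ∈ [0,1], and C ≥ 0. Then Δ(γ,p,C,r) < 0; that is, an agent with discount factor below 1/2 never has a positive confrontation incentive, for any shutdown probability and any nonnegative confrontation cost. -/
theorem stmt12 (γ r p C : ℝ) (hγ : γ ∈ Set.Ico (0:ℝ) (1/2)) (hr : 0 < r)
    (hp : p ∈ Set.Icc (0:ℝ) 1) (hC : 0 ≤ C) :
    confIncentive γ p C r < 0 := by
  obtain ⟨hγ0, hγ2⟩ := hγ
  obtain ⟨hp0, hp1⟩ := hp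
  have h1γ : (0:ℝ) < 1 - γ := by linarith
  have hd : (0:ℝ) < 1 - γ * (1 - p) := by nlinarith
  have hd1 : 1 - γ * (1 - p) ≤ 1 := by nlinarith
  have h1 : γ * r / (1 - γ) < r := by
    rw [div_lt_iff₀ h1γ]; nlinarith
  have h2 : r ≤ r / (1 - γ * (1 - p)) := by
    rw [le_div_iff₀ hd]; nlinarith
  unfold confIncentive
  linarith
end
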